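/- Global stability of continuous-time tatonnement: under gross substitutes, homogeneity of degree zero, Walras' law, and continuity of z, the function V(P) = ∑_m (p_m − p*_m)² is a Lyapunov function for the price dynamics dP/dt = z(P), where P* is the (normalized) equilibrium price with the same norm-type normalization; that is, dV/dt = −2 P*·z(P) ≤ 0 along trajectories, with equality only at equilibrium prices. -/

import Mathlib

open Finset

def PosPrice {M : ℕ} (P : Fin M → ℝ) : Prop := ∀ m, 0 < P m

/-!
Since `P · z(P) = 0` (Walras), `dV/dt = -2 P* · z(P)`, and the point is that `P* · z(P) > 0`
unless `P` is proportional to `P*`. With weights `w m = P m * z P m` (summing to `0`) and ratios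
`s m = P* m / P m` we have `P* · z(P) = ∑ w m * s m`, and Abel summation over the values of `s`
reduces its positivity to that of `∑_{m ∈ L} w m`, `L = {s > t}`, for every threshold `t`
strictly inside the range of `s`. The goods in `L` are those cheap relative to `P*`.
Put `Q = min (t • P) P*`. Raising `Q` to `t • P` fixes the prices in `L`, so by gross
substitutes the excess demands on `L` increase to those at `P`; raising `Q` to `P*` fixes the
prices off `L`, so the excess demands there increase to `0`. Hence `z Q < 0` off `L`, and
Walras' law at `Q` gives `0 < ∑_{m ∈ L} Q m * z Q m ≤ t * ∑_{m ∈ L} w m`.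
-/

theorem sum_filter_lt_min {ι : Type*} [Fintype ι] (w x : ι → ℝ) (b t : ℝ) :
    ∑ i with t < min (x i) b, w i = if t < b then ∑ i with t < x i, w i else 0 := by
  split_ifs with htb <;> simp [htb]

theorem sum_mul_eq_sum_mul_min_add {ι : Type*} [Fintype ι] (w x : ι → ℝ) {a b : ℝ}
    (hab : ∀ i, b < x i → x i = a) :
    ∑ i, w i * x i = ∑ i, w i * min (x i) b + (a - b) * ∑ i with b < x i, w i := by
  rw [sum_filter, mul_sum, ← sum_add_distrib]
  refine sum_congr rfl fun i _ => ?_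
  split_ifs with h
  · rw [hab i h, min_eq_right (hab i h ▸ h).le]
    ring
  · rw [min_eq_left (not_lt.mp h)]
    ring

theorem sum_mul_nonneg_of_forall_sum_filter_nonneg {ι : Type*} [Fintype ι] (w x : ι → ℝ)
    (hw : ∑ i, w i = 0) (hx : ∀ t, 0 ≤ ∑ i with t < x i, w i) : 0 ≤ ∑ i, w i * x i := by
  classical
  suffices ∀ T : Finset ℝ, ∀ x : ι → ℝ, (∀ i, x i ∈ T) →
      (∀ t, 0 ≤ ∑ i with t < x i, w i) → 0 ≤ ∑ i, w i * x i from
    this _ x (fun i => mem_image_of_mem x (mem_univ i)) hx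
  intro T
  induction T using Finset.induction_on_max with
  | empty =>
    intro x hx _
    exact (sum_eq_zero fun i _ => absurd (hx i) (notMem_empty _)).ge
  | insert a S hlt ih =>
    intro x hxT hx
    obtain rfl | hS := S.eq_empty_or_nonempty
    · have hxa : ∀ i, x i = a := by simpa using hxT
      simp [hxa, ← sum_mul, hw]
    set b := S.max' hS
    have hba : b < a := hlt b (S.max'_mem hS)
    have hab : ∀ i, b < x i → x i = a := fun i hbi =>
      (mem_insert.mp (hxT i)).resolve_right fun hi => (S.le_max' _ hi).not_gt hbi
    have hmin : ∀ i, min (x i) b ∈ S := fun i => by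
      rcases mem_insert.mp (hxT i) with hi | hi
      · rw [hi, min_eq_right hba.le]
        exact S.max'_mem hS
      · rwa [min_eq_left (S.le_max' _ hi)]
    have hxmin : ∀ t, 0 ≤ ∑ i with t < min (x i) b, w i := fun t => by
      rw [sum_filter_lt_min]
      split_ifs
      exacts [hx t, le_rfl]
    rw [sum_mul_eq_sum_mul_min_add w x hab]
    exact add_nonneg (ih _ hmin hxmin) (mul_nonneg (sub_nonneg.mpr hba.le) (hx b))

theorem sum_mul_pos_of_forall_sum_filter_pos {ι : Type*} [Fintype ι] (w x : ι → ℝ)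
    (hw : ∑ i, w i = 0)
    (hx : ∀ t, (∃ i, x i ≤ t) → (∃ i, t < x i) → 0 < ∑ i with t < x i, w i)
    (hne : ∃ i j, x i ≠ x j) : 0 < ∑ i, w i * x i := by
  have hx' : ∀ t, 0 ≤ ∑ i with t < x i, w i := fun t => by
    by_cases hle : ∃ i, x i ≤ t
    · by_cases hlt : ∃ i, t < x i
      · exact (hx t hle hlt).le
      · push Not at hlt
        simp [filter_false_of_mem fun i _ => (hlt i).not_gt]
    · push Not at hle
      simp [filter_true_of_mem fun i _ => hle i, hw]
  obtain ⟨i, j, hij⟩ := hne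
  set a := (univ.image x).max' (univ.image_nonempty.mpr ⟨i, mem_univ i⟩)
  have hxa : ∀ k, x k ≤ a := fun k => le_max' _ _ (mem_image_of_mem x (mem_univ k))
  obtain ⟨k, -, hka⟩ := mem_image.mp (max'_mem (univ.image x) _)
  have hB : ((univ.image x).filter (· < a)).Nonempty := by
    rcases (hxa i).lt_or_eq with hi | hi
    · exact ⟨x i, mem_filter.mpr ⟨mem_image_of_mem x (mem_univ i), hi⟩⟩
    · exact ⟨x j, mem_filter.mpr ⟨mem_image_of_mem x (mem_univ j),
        (hxa j).lt_of_ne fun hj => hij (hi.trans hj.symm)⟩⟩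
  set b := ((univ.image x).filter (· < a)).max' hB
  obtain ⟨hb, hba⟩ := mem_filter.mp (max'_mem _ hB)
  obtain ⟨l, -, hlb⟩ := mem_image.mp hb
  have hab : ∀ k, b < x k → x k = a := fun k hbk =>
    (hxa k).eq_or_lt.resolve_right fun hka =>
      (le_max' _ _ (mem_filter.mpr ⟨mem_image_of_mem x (mem_univ k), hka⟩)).not_gt hbk
  have hxmin : ∀ t, 0 ≤ ∑ i with t < min (x i) b, w i := fun t => by
    rw [sum_filter_lt_min]
    split_ifs
    exacts [hx' t, le_rfl]
  rw [sum_mul_eq_sum_mul_min_add w x hab]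
  exact add_pos_of_nonneg_of_pos (sum_mul_nonneg_of_forall_sum_filter_nonneg w _ hw hxmin)
    (mul_pos (sub_pos.mpr hba) (hx b ⟨l, hlb.le⟩ ⟨k, hka ▸ hba⟩))

section Tatonnement

variable {ι : Type*}

def GrossSubstitutes (z : (ι → ℝ) → ι → ℝ) : Prop :=
  ∀ P P' : ι → ℝ, (∀ m, 0 < P m) → (∀ m, 0 < P' m) →
    ∀ k, P k < P' k → (∀ m, m ≠ k → P' m = P m) → ∀ m, m ≠ k → z P m < z P' m

def HomogeneousOfDegreeZero (z : (ι → ℝ) → ι → ℝ) : Prop :=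
  ∀ P : ι → ℝ, (∀ m, 0 < P m) → ∀ lam : ℝ, 0 < lam → z (lam • P) = z P

variable {z : (ι → ℝ) → ι → ℝ} {Pstar P Q Q' : ι → ℝ} {j : ι}

theorem excess_demand_eq_zero_of_div_eq (hhom : HomogeneousOfDegreeZero z)
    (hPstar : ∀ m, 0 < Pstar m) (heq : z Pstar = 0) (hP : ∀ m, 0 < P m)
    (hconst : ∀ i j, Pstar i / P i = Pstar j / P j) : z P = 0 := by
  funext j
  have hPstar_eq : (Pstar j / P j) • P = Pstar := funext fun i => by
    rw [Pi.smul_apply, smul_eq_mul, hconst j i, div_mul_cancel₀ _ (hP i).ne']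
  rw [← hhom P hP _ (div_pos (hPstar j) (hP j)), hPstar_eq, heq]

variable [Fintype ι]

def WalrasLaw (z : (ι → ℝ) → ι → ℝ) : Prop :=
  ∀ P : ι → ℝ, (∀ m, 0 < P m) → ∑ m, P m * z P m = 0

theorem GrossSubstitutes.apply_le_apply (hz : GrossSubstitutes z) (hQ : ∀ m, 0 < Q m)
    (hQ' : ∀ m, 0 < Q' m) (hle : Q ≤ Q') (hj : Q j = Q' j) : z Q j ≤ z Q' j := by
  classical
  suffices ∀ D : Finset ι, j ∉ D → ∀ Q, (∀ m, 0 < Q m) → Q ≤ Q' → (∀ m ∉ D, Q m = Q' m) →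
      z Q j ≤ z Q' j from
    this (univ.erase j) (notMem_erase j univ) Q hQ hle fun m hm => by
      rw [show m = j by simpa using hm, hj]
  intro D
  induction D using Finset.induction_on with
  | empty =>
    intro _ Q _ _ hagree
    rw [funext fun m => hagree m (notMem_empty m)]
  | insert k D _ ih =>
    intro hjD Q hQ hle hagree
    have hjk : j ≠ k := ne_of_mem_of_not_mem (mem_insert_self k D) hjD |>.symm
    set Q'' := Function.update Q k (Q' k)
    have hQ'' : ∀ m, 0 < Q'' m :=
      (Function.forall_update_iff Q fun _ y => 0 < y).mpr ⟨hQ' k, fun m _ => hQ m⟩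
    have hstep : z Q j ≤ z Q'' j := by
      rcases (hle k).lt_or_eq with hlt | heq
      · exact (hz Q Q'' hQ hQ'' k (by simpa [Q''] using hlt)
          (fun m hm => Function.update_of_ne hm _ _) j hjk).le
      · rw [show Q'' = Q from Function.update_eq_self_iff.mpr heq.symm]
    refine hstep.trans (ih (fun h => hjD (mem_insert_of_mem h)) Q'' hQ''
      (update_le_iff.mpr ⟨le_rfl, fun m _ => hle m⟩) fun m hm => ?_)
    rcases eq_or_ne m k with rfl | hmk
    · simp [Q'']
    · simpa [Q'', hmk] using hagree m (by simp [hmk, hm])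

theorem GrossSubstitutes.apply_lt_apply (hz : GrossSubstitutes z) (hQ : ∀ m, 0 < Q m)
    (hQ' : ∀ m, 0 < Q' m) (hlt : Q < Q') (hj : Q j = Q' j) : z Q j < z Q' j := by
  classical
  obtain ⟨hle, k, hk⟩ := Pi.lt_def.mp hlt
  have hjk : j ≠ k := by
    rintro rfl
    exact hk.ne hj
  set Q'' := Function.update Q k (Q' k)
  have hQ'' : ∀ m, 0 < Q'' m :=
    (Function.forall_update_iff Q fun _ y => 0 < y).mpr ⟨hQ' k, fun m _ => hQ m⟩
  calc z Q j < z Q'' j := hz Q Q'' hQ hQ'' k (by simpa [Q''] using hk)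
        (fun m hm => Function.update_of_ne hm _ _) j hjk
    _ ≤ z Q' j := hz.apply_le_apply hQ'' hQ' (update_le_iff.mpr ⟨le_rfl, fun m _ => hle m⟩)
        (by simpa [Q'', hjk] using hj)

theorem sum_filter_mul_excess_demand_pos (hz : GrossSubstitutes z)
    (hhom : HomogeneousOfDegreeZero z) (hwalras : WalrasLaw z) (hPstar : ∀ m, 0 < Pstar m)
    (heq : z Pstar = 0) (hP : ∀ m, 0 < P m) {t : ℝ} (hle : ∃ i, Pstar i / P i ≤ t)
    (hlt : ∃ i, t < Pstar i / P i) : 0 < ∑ i with t < Pstar i / P i, P i * z P i := by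
  obtain ⟨i₀, hi₀⟩ := hle
  obtain ⟨i₁, hi₁⟩ := hlt
  have ht : 0 < t := (div_pos (hPstar i₀) (hP i₀)).trans_le hi₀
  have hlt_iff : ∀ i, t < Pstar i / P i ↔ t * P i < Pstar i := fun i => lt_div_iff₀ (hP i)
  set Q : ι → ℝ := fun i => min (t * P i) (Pstar i)
  have hQ : ∀ i, 0 < Q i := fun i => lt_min (mul_pos ht (hP i)) (hPstar i)
  have hzQ_le : ∀ i, t < Pstar i / P i → z Q i ≤ z P i := fun i hi => by
    rw [← hhom P hP t ht]
    exact hz.apply_le_apply hQ (fun m => mul_pos ht (hP m)) (fun m => min_le_left _ _)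
      (min_eq_left ((hlt_iff i).mp hi).le)
  have hzQ_neg : ∀ i, ¬ t < Pstar i / P i → z Q i < 0 := fun i hi => by
    have hQlt : Q < Pstar := Pi.lt_def.mpr
      ⟨fun m => min_le_right _ _, i₁, min_lt_of_left_lt ((hlt_iff i₁).mp hi₁)⟩
    simpa [heq] using hz.apply_lt_apply hQ hPstar hQlt
      (min_eq_right (not_lt.mp (mt (hlt_iff i).mpr hi)))
  have hsplit := hwalras Q hQ
  rw [← sum_filter_add_sum_filter_not univ (fun i => t < Pstar i / P i)] at hsplit
  have hneg : ∑ i with ¬ t < Pstar i / P i, Q i * z Q i < 0 :=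
    sum_neg (fun i hi => mul_neg_of_pos_of_neg (hQ i) (hzQ_neg i (mem_filter.mp hi).2))
      ⟨i₀, mem_filter.mpr ⟨mem_univ i₀, not_lt.mpr hi₀⟩⟩
  have : 0 < t * ∑ i with t < Pstar i / P i, P i * z P i := by
    calc 0 < ∑ i with t < Pstar i / P i, Q i * z Q i := by linarith
      _ ≤ ∑ i with t < Pstar i / P i, t * (P i * z P i) := sum_le_sum fun i hi => by
        have hi := (mem_filter.mp hi).2
        rw [show Q i = t * P i from min_eq_left ((hlt_iff i).mp hi).le, ← mul_assoc]
        exact mul_le_mul_of_nonneg_left (hzQ_le i hi) (mul_pos ht (hP i)).le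
      _ = t * ∑ i with t < Pstar i / P i, P i * z P i := (mul_sum ..).symm
  exact (mul_pos_iff_of_pos_left ht).mp this

theorem sum_mul_excess_demand_pos (hz : GrossSubstitutes z) (hhom : HomogeneousOfDegreeZero z)
    (hwalras : WalrasLaw z) (hPstar : ∀ m, 0 < Pstar m) (heq : z Pstar = 0)
    (hP : ∀ m, 0 < P m) (hne : ∃ i j, Pstar i / P i ≠ Pstar j / P j) :
    0 < ∑ m, Pstar m * z P m := by
  have hval : ∀ m, P m * z P m * (Pstar m / P m) = Pstar m * z P m := fun m => by
    field_simp [(hP m).ne']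
  simpa only [hval] using sum_mul_pos_of_forall_sum_filter_pos (fun m => P m * z P m)
    (fun m => Pstar m / P m) (hwalras P hP)
    (fun _ hle hlt => sum_filter_mul_excess_demand_pos hz hhom hwalras hPstar heq hP hle hlt) hne

end Tatonnement

theorem tatonnement_lyapunov_general
    (M : ℕ) (z : (Fin M → ℝ) → Fin M → ℝ)
    (hhom : ∀ P : Fin M → ℝ, PosPrice P → ∀ lam : ℝ, 0 < lam →
        z (lam • P) = z P)
    (hwalras : ∀ P : Fin M → ℝ, PosPrice P → ∑ m, P m * z P m = 0)
    (hgs : ∀ P P' : Fin M → ℝ, PosPrice P → PosPrice P' →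
        ∀ k : Fin M, P k < P' k → (∀ m, m ≠ k → P' m = P m) →
        ∀ m, m ≠ k → z P m < z P' m)
    (Pstar : Fin M → ℝ) (hPstar : PosPrice Pstar) (heq : z Pstar = 0)
    (P : Fin M → ℝ) (hP : PosPrice P) :
    (2 * ∑ m, (P m - Pstar m) * z P m = -(2 * ∑ m, Pstar m * z P m)) ∧
    (2 * ∑ m, (P m - Pstar m) * z P m ≤ 0) ∧
    (2 * ∑ m, (P m - Pstar m) * z P m = 0 → z P = 0) := by
  have hdot : ∑ m, (P m - Pstar m) * z P m = -∑ m, Pstar m * z P m := by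
    simp only [sub_mul, sum_sub_distrib, hwalras P hP, zero_sub]
  by_cases hconst : ∀ i j, Pstar i / P i = Pstar j / P j
  · have hzP : z P = 0 := excess_demand_eq_zero_of_div_eq hhom hPstar heq hP hconst
    simp [hzP]
  · push Not at hconst
    have hpos := sum_mul_excess_demand_pos hgs hhom hwalras hPstar heq hP hconst
    rw [hdot]
    exact ⟨by ring, by linarith, fun h => absurd h (by linarith)⟩

/-- Global stability of tatonnement: under gross substitutes,
homogeneity of degree zero, Walras' law and continuity, `V(P) = ∑ (p_m − p*_m)²`
is a Lyapunov function for `dP/dt = z(P)`: along trajectories the derivative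
of `V` satisfies `dV/dt = 2(P − P*)·z(P) = −2 P*·z(P) ≤ 0`, with equality only
at equilibrium prices (`z(P) = 0`). -/
theorem tatonnement_lyapunov
    (M : ℕ) (z : (Fin M → ℝ) → Fin M → ℝ)
    (hcont : ContinuousOn z {P | PosPrice P})
    (hhom : ∀ P : Fin M → ℝ, PosPrice P → ∀ lam : ℝ, 0 < lam →
        z (lam • P) = z P)
    (hwalras : ∀ P : Fin M → ℝ, PosPrice P → ∑ m, P m * z P m = 0)
    (hgs : ∀ P P' : Fin M → ℝ, PosPrice P → PosPrice P' →
        ∀ k : Fin M, P k < P' k → (∀ m, m ≠ k → P' m = P m) →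
        ∀ m, m ≠ k → z P m < z P' m)
    (Pstar : Fin M → ℝ) (hPstar : PosPrice Pstar) (heq : z Pstar = 0)
    (P : Fin M → ℝ) (hP : PosPrice P) :
    (2 * ∑ m, (P m - Pstar m) * z P m = -(2 * ∑ m, Pstar m * z P m)) ∧
    (2 * ∑ m, (P m - Pstar m) * z P m ≤ 0) ∧
    (2 * ∑ m, (P m - Pstar m) * z P m = 0 → z P = 0) :=
  tatonnement_lyapunov_general M z hhom hwalras hgs Pstar hPstar heq P hP
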